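/- arXiv:math/0101200 — 3 statements merged into one kernel-verified Lean document; each statement's English description precedes it below -/
import Mathlib

section
/- (Cauchy's theorem in bicomplex space.) Let G ⊆ ℂ×ℂ be open, let φ₁, φ₂ : ℂ×ℂ → ℂ be ℂ-differentiable on G and satisfy the bicomplex Cauchy–Riemann equations on G, and set ψ = (φ₁,φ₂). Let p : [r,s] → G be a continuously differentiable closed curve (p(r) = p(s)) which bounds a smooth surface in G, in the sense that there is a continuously differentiable map H : [0,1]×[r,s] → G with H(1,t) = p(t) for all t, H(h,r) = H(h,s) for all h, and H(0,t) independent of t. Then ∫_r^s ψ(p(t)) ⊙ p′(t) dt = 0. -/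
/-- Bicomplex multiplication on ℂ × ℂ. -/
def bmul (p q : ℂ × ℂ) : ℂ × ℂ := (p.1 * q.1 - p.2 * q.2, p.2 * q.1 + p.1 * q.2)

/-!
The Cauchy–Riemann equations say exactly that the derivative of `ψ = (φ₁, φ₂)` at `q` is bicomplex
multiplication by `ψ'(q) := dψ_q (1, 0)`. Hence the 1-form `ω_q v = ψ q ⊙ v` has derivative
`(u, v) ↦ (ψ'(q) ⊙ u) ⊙ v`, which is symmetric because `⊙` is commutative and associative, so by
the Poincaré lemma `ω` has a primitive on every ball in `G`.

The integral of a continuous, locally exact 1-form over the boundary of a rectangle vanishes: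
rectangles with sides shorter than a Lebesgue number carry a primitive, and boundary integrals are
additive. Pulling `ω` back along `H` needs only the continuity of `dH`, so a `C¹` homotopy
suffices. On `[0, 1] × [r, s]` the sides `t = r` and `t = s` cancel because `H (h, r) = H (h, s)`,
the side `h = 0` is a constant curve, and the side `h = 1` is `p`.
-/

open Set Topology Metric MeasureTheory intervalIntegral
open scoped Interval

theorem apply_eq_apply_of_forall_abs_sub_lt {α : Type*} {f : ℝ → α} {a b δ : ℝ} (hδ : 0 < δ)
    (hf : ∀ x ∈ [[a, b]], ∀ y ∈ [[a, b]], |x - y| < δ → f x = f y)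
    {x y : ℝ} (hx : x ∈ [[a, b]]) (hy : y ∈ [[a, b]]) : f x = f y :=
  isPreconnected_uIcc.induction₂ (fun x y => f x = f y)
    (fun x hx => by
      filter_upwards [self_mem_nhdsWithin, mem_nhdsWithin_of_mem_nhds (ball_mem_nhds x hδ)]
        with y hy hxy
      exact hf x hx y hy (by rwa [abs_sub_comm, ← Real.dist_eq]))
    (fun _ _ _ _ _ _ => Eq.trans) (fun _ _ _ _ => Eq.symm) hx hy

theorem integral_eq_sub_of_hasDerivWithinAt_uIcc {F : Type*} [NormedAddCommGroup F]
    [NormedSpace ℝ F] [CompleteSpace F] {f f' : ℝ → F} {a b : ℝ}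
    (hf : ∀ t ∈ [[a, b]], HasDerivWithinAt f (f' t) [[a, b]] t)
    (hint : IntervalIntegrable f' volume a b) :
    ∫ t in a..b, f' t = f b - f a :=
  integral_eq_sub_of_hasDeriv_right (fun t ht => (hf t ht).continuousWithinAt)
    (fun t ht => ((hf t (Ioo_subset_Icc_self ht)).hasDerivAt
      (Icc_mem_nhds ht.1 ht.2)).hasDerivWithinAt) hint

section LocallyExact

variable {E F : Type*} [NormedAddCommGroup E] [NormedSpace ℝ E]
  [NormedAddCommGroup F] [NormedSpace ℝ F]

def IsLocallyExactOn (ω : E → E →L[ℝ] F) (S : Set E) : Prop :=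
  ∀ x ∈ S, ∃ U ∈ 𝓝[S] x, ∃ Φ : E → F, ∀ y ∈ U, HasFDerivWithinAt Φ (ω y) S y

namespace IsLocallyExactOn

variable {ω : E → E →L[ℝ] F} {S : Set E}

theorem comp {E' : Type*} [NormedAddCommGroup E'] [NormedSpace ℝ E'] (hω : IsLocallyExactOn ω S)
    {S' : Set E'} {H : E' → E} {D : E' → E' →L[ℝ] E}
    (hD : ∀ z ∈ S', HasFDerivWithinAt H (D z) S' z) (hHS : MapsTo H S' S) :
    IsLocallyExactOn (fun z => (ω (H z)).comp (D z)) S' := by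
  intro z hz
  obtain ⟨U, hU, Φ, hΦ⟩ := hω (H z) (hHS hz)
  refine ⟨S' ∩ H ⁻¹' U, Filter.inter_mem self_mem_nhdsWithin
    ((hD z hz).continuousWithinAt.tendsto_nhdsWithin hHS hU), Φ ∘ H, fun y hy => ?_⟩
  exact (hΦ (H y) hy.2).comp y (hD y hy.1) hHS

theorem exists_lebesgue_number (hω : IsLocallyExactOn ω S) (hS : IsCompact S) :
    ∃ δ > 0, ∀ x ∈ S, ∃ Φ : E → F, ∀ y ∈ ball x δ ∩ S, HasFDerivWithinAt Φ (ω y) S y := by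
  choose U hU Φ hΦ using hω
  obtain ⟨δ, hδ, hcov⟩ := uniformity_basis_dist.lebesgue_number_lemma_nhdsWithin' hS hU
  refine ⟨δ, hδ, fun x hx => ?_⟩
  obtain ⟨⟨z, hz⟩, hxz⟩ := hcov x hx
  exact ⟨Φ z hz, fun y hy => hΦ z hz y
    (hxz ⟨mem_ball'.mp hy.1, hy.2⟩)⟩

end IsLocallyExactOn

section Rectangle

variable {η : ℝ × ℝ → ℝ × ℝ →L[ℝ] F}

noncomputable def boundaryIntegral (η : ℝ × ℝ → ℝ × ℝ →L[ℝ] F) (x₀ x₁ y₀ y₁ : ℝ) : F :=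
  (∫ x in x₀..x₁, η (x, y₀) (1, 0)) + (∫ y in y₀..y₁, η (x₁, y) (0, 1))
    - (∫ x in x₀..x₁, η (x, y₁) (1, 0)) - ∫ y in y₀..y₁, η (x₀, y) (0, 1)

theorem ContinuousOn.intervalIntegrable_apply_vertical {s : Set ℝ} {a b x : ℝ}
    (hη : ContinuousOn η (s ×ˢ [[a, b]])) (hx : x ∈ s) (v : ℝ × ℝ) :
    IntervalIntegrable (fun y => η (x, y) v) volume a b :=
  ((hη.comp (continuous_const.prodMk continuous_id).continuousOn fun _ hy => ⟨hx, hy⟩).clm_apply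
    continuousOn_const).intervalIntegrable

theorem ContinuousOn.intervalIntegrable_apply_horizontal {t : Set ℝ} {a b y : ℝ}
    (hη : ContinuousOn η ([[a, b]] ×ˢ t)) (hy : y ∈ t) (v : ℝ × ℝ) :
    IntervalIntegrable (fun x => η (x, y) v) volume a b :=
  ((hη.comp (continuous_id.prodMk continuous_const).continuousOn fun _ hx => ⟨hx, hy⟩).clm_apply
    continuousOn_const).intervalIntegrable

theorem boundaryIntegral_add_adjacent_vertical {x₀ x₁ y₀ y₁ y₂ : ℝ}
    (hη : ContinuousOn η ([[x₀, x₁]] ×ˢ ([[y₀, y₁]] ∪ [[y₁, y₂]]))) :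
    boundaryIntegral η x₀ x₁ y₀ y₁ + boundaryIntegral η x₀ x₁ y₁ y₂ =
      boundaryIntegral η x₀ x₁ y₀ y₂ := by
  have h₀₁ := hη.mono (prod_mono_right subset_union_left)
  have h₁₂ := hη.mono (prod_mono_right subset_union_right)
  simp only [boundaryIntegral]
  rw [← integral_add_adjacent_intervals (h₀₁.intervalIntegrable_apply_vertical right_mem_uIcc _)
      (h₁₂.intervalIntegrable_apply_vertical right_mem_uIcc _),
    ← integral_add_adjacent_intervals (h₀₁.intervalIntegrable_apply_vertical left_mem_uIcc _)
      (h₁₂.intervalIntegrable_apply_vertical left_mem_uIcc _)]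
  abel

theorem boundaryIntegral_add_adjacent_horizontal {x₀ x₁ x₂ y₀ y₁ : ℝ}
    (hη : ContinuousOn η (([[x₀, x₁]] ∪ [[x₁, x₂]]) ×ˢ [[y₀, y₁]])) :
    boundaryIntegral η x₀ x₁ y₀ y₁ + boundaryIntegral η x₁ x₂ y₀ y₁ =
      boundaryIntegral η x₀ x₂ y₀ y₁ := by
  have h₀₁ := hη.mono (prod_mono_left subset_union_left)
  have h₁₂ := hη.mono (prod_mono_left subset_union_right)
  simp only [boundaryIntegral]
  rw [← integral_add_adjacent_intervals (h₀₁.intervalIntegrable_apply_horizontal left_mem_uIcc _)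
      (h₁₂.intervalIntegrable_apply_horizontal left_mem_uIcc _),
    ← integral_add_adjacent_intervals (h₀₁.intervalIntegrable_apply_horizontal right_mem_uIcc _)
      (h₁₂.intervalIntegrable_apply_horizontal right_mem_uIcc _)]
  abel

variable [CompleteSpace F]

theorem integral_apply_eq_sub_of_hasFDerivWithinAt {Q : Set (ℝ × ℝ)} {Φ : ℝ × ℝ → F}
    (hΦ : ∀ z ∈ Q, HasFDerivWithinAt Φ (η z) Q z) (hη : ContinuousOn η Q)
    {L : ℝ → ℝ × ℝ} {w : ℝ × ℝ} (hL : ∀ t, HasDerivAt L w t) {a b : ℝ}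
    (hLQ : MapsTo L [[a, b]] Q) :
    ∫ t in a..b, η (L t) w = Φ (L b) - Φ (L a) :=
  integral_eq_sub_of_hasDerivWithinAt_uIcc
    (fun t ht => (hΦ (L t) (hLQ ht)).comp_hasDerivWithinAt t (hL t).hasDerivWithinAt hLQ)
    ((hη.comp (fun t _ => (hL t).continuousAt.continuousWithinAt) hLQ).clm_apply
      continuousOn_const).intervalIntegrable

theorem boundaryIntegral_eq_zero_of_hasFDerivWithinAt {Φ : ℝ × ℝ → F} {x₀ x₁ y₀ y₁ : ℝ}
    (hΦ : ∀ z ∈ [[x₀, x₁]] ×ˢ [[y₀, y₁]],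
      HasFDerivWithinAt Φ (η z) ([[x₀, x₁]] ×ˢ [[y₀, y₁]]) z)
    (hη : ContinuousOn η ([[x₀, x₁]] ×ˢ [[y₀, y₁]])) :
    boundaryIntegral η x₀ x₁ y₀ y₁ = 0 := by
  have horizontal : ∀ y ∈ [[y₀, y₁]], ∫ x in x₀..x₁, η (x, y) (1, 0) = Φ (x₁, y) - Φ (x₀, y) :=
    fun y hy => integral_apply_eq_sub_of_hasFDerivWithinAt hΦ hη (L := fun x => (x, y))
      (fun t => (hasDerivAt_id t).prodMk (hasDerivAt_const t y)) fun _ hx => ⟨hx, hy⟩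
  have vertical : ∀ x ∈ [[x₀, x₁]], ∫ y in y₀..y₁, η (x, y) (0, 1) = Φ (x, y₁) - Φ (x, y₀) :=
    fun x hx => integral_apply_eq_sub_of_hasFDerivWithinAt hΦ hη (L := fun y => (x, y))
      (fun t => (hasDerivAt_const t x).prodMk (hasDerivAt_id t)) fun _ hy => ⟨hx, hy⟩
  rw [boundaryIntegral, horizontal y₀ left_mem_uIcc, horizontal y₁ right_mem_uIcc,
    vertical x₀ left_mem_uIcc, vertical x₁ right_mem_uIcc]
  abel

theorem IsLocallyExactOn.boundaryIntegral_eq_zero {x₀ x₁ y₀ y₁ : ℝ}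
    (hη : IsLocallyExactOn η ([[x₀, x₁]] ×ˢ [[y₀, y₁]]))
    (hηc : ContinuousOn η ([[x₀, x₁]] ×ˢ [[y₀, y₁]])) :
    boundaryIntegral η x₀ x₁ y₀ y₁ = 0 := by
  obtain ⟨δ, hδ, hprim⟩ := hη.exists_lebesgue_number (isCompact_uIcc.prod isCompact_uIcc)
  have small : ∀ a ∈ [[x₀, x₁]], ∀ b ∈ [[x₀, x₁]], ∀ c ∈ [[y₀, y₁]], ∀ d ∈ [[y₀, y₁]],
      |a - b| < δ → |c - d| < δ → boundaryIntegral η a b c d = 0 := by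
    intro a ha b hb c hc d hd hab hcd
    obtain ⟨Φ, hΦ⟩ := hprim (a, c) ⟨ha, hc⟩
    have hsub : [[a, b]] ×ˢ [[c, d]] ⊆ [[x₀, x₁]] ×ˢ [[y₀, y₁]] :=
      prod_mono (uIcc_subset_uIcc ha hb) (uIcc_subset_uIcc hc hd)
    have hball : [[a, b]] ×ˢ [[c, d]] ⊆ ball (a, c) δ := fun z hz => by
      rw [mem_ball, Prod.dist_eq, Real.dist_eq, Real.dist_eq]
      exact max_lt ((abs_sub_left_of_mem_uIcc hz.1).trans_lt (by rwa [abs_sub_comm]))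
        ((abs_sub_left_of_mem_uIcc hz.2).trans_lt (by rwa [abs_sub_comm]))
    exact boundaryIntegral_eq_zero_of_hasFDerivWithinAt
      (fun z hz => (hΦ z ⟨hball hz, hsub hz⟩).mono hsub) (hηc.mono hsub)
  have strip : ∀ a ∈ [[x₀, x₁]], ∀ b ∈ [[x₀, x₁]], |a - b| < δ →
      boundaryIntegral η a b y₀ y₁ = 0 := by
    intro a ha b hb hab
    have hconst := apply_eq_apply_of_forall_abs_sub_lt hδ
      (f := fun d => boundaryIntegral η a b y₀ d) (fun c hc d hd hcd => ?_)
      (left_mem_uIcc : y₀ ∈ [[y₀, y₁]]) right_mem_uIcc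
    · simpa [boundaryIntegral] using hconst.symm
    · rw [← boundaryIntegral_add_adjacent_vertical (hηc.mono (prod_mono (uIcc_subset_uIcc ha hb)
        (union_subset (uIcc_subset_uIcc left_mem_uIcc hc) (uIcc_subset_uIcc hc hd)))),
        small a ha b hb c hc d hd hab hcd, add_zero]
  have hconst := apply_eq_apply_of_forall_abs_sub_lt hδ
    (f := fun b => boundaryIntegral η x₀ b y₀ y₁) (fun a ha b hb hab => ?_)
    (left_mem_uIcc : x₀ ∈ [[x₀, x₁]]) right_mem_uIcc
  · simpa [boundaryIntegral] using hconst.symm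
  · rw [← boundaryIntegral_add_adjacent_horizontal (hηc.mono (prod_mono
      (union_subset (uIcc_subset_uIcc left_mem_uIcc ha) (uIcc_subset_uIcc ha hb)) subset_rfl)),
      strip a ha b hb hab, add_zero]

end Rectangle

theorem HasFDerivWithinAt.hasDerivWithinAt_horizontal {H : ℝ × ℝ → E} {D : ℝ × ℝ →L[ℝ] E}
    {s t : Set ℝ} {x y : ℝ} (hH : HasFDerivWithinAt H D (s ×ˢ t) (x, y)) (hy : y ∈ t) :
    HasDerivWithinAt (fun x => H (x, y)) (D (1, 0)) s x :=
  hH.comp_hasDerivWithinAt x ((hasDerivAt_id x).prodMk (hasDerivAt_const x y)).hasDerivWithinAt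
    fun _ hx => (⟨hx, hy⟩ : (_, y) ∈ s ×ˢ t)

theorem HasFDerivWithinAt.hasDerivWithinAt_vertical {H : ℝ × ℝ → E} {D : ℝ × ℝ →L[ℝ] E}
    {s t : Set ℝ} {x y : ℝ} (hH : HasFDerivWithinAt H D (s ×ˢ t) (x, y)) (hx : x ∈ s) :
    HasDerivWithinAt (fun y => H (x, y)) (D (0, 1)) t y :=
  hH.comp_hasDerivWithinAt y ((hasDerivAt_const y x).prodMk (hasDerivAt_id y)).hasDerivWithinAt
    fun _ hy => (⟨hx, hy⟩ : (x, _) ∈ s ×ˢ t)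

theorem IsLocallyExactOn.integral_eq_of_homotopy [CompleteSpace F] {ω : E → E →L[ℝ] F}
    {G : Set E} (hω : IsLocallyExactOn ω G) (hωc : ContinuousOn ω G) {r s : ℝ} (hrs : r < s)
    {H : ℝ × ℝ → E} (hH : ContDiffOn ℝ 1 H (Icc 0 1 ×ˢ Icc r s))
    (hHG : MapsTo H (Icc 0 1 ×ˢ Icc r s) G) (hHrs : ∀ x ∈ Icc (0 : ℝ) 1, H (x, r) = H (x, s))
    {γ₀' γ₁' : ℝ → E}
    (hγ₀ : ∀ t ∈ Icc r s, HasDerivWithinAt (fun τ => H (0, τ)) (γ₀' t) (Icc r s) t)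
    (hγ₁ : ∀ t ∈ Icc r s, HasDerivWithinAt (fun τ => H (1, τ)) (γ₁' t) (Icc r s) t) :
    ∫ t in r..s, ω (H (0, t)) (γ₀' t) = ∫ t in r..s, ω (H (1, t)) (γ₁' t) := by
  set R := Icc (0 : ℝ) 1 ×ˢ Icc r s
  set D := fderivWithin ℝ H R
  have hD : ∀ z ∈ R, HasFDerivWithinAt H (D z) R z :=
    fun z hz => (hH.differentiableOn one_ne_zero z hz).hasFDerivWithinAt
  have hDc : ContinuousOn D R :=
    hH.continuousOn_fderivWithin ((uniqueDiffOn_Icc zero_lt_one).prod (uniqueDiffOn_Icc hrs)) le_rfl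
  set η : ℝ × ℝ → ℝ × ℝ →L[ℝ] F := fun z => (ω (H z)).comp (D z)
  have hηc : ContinuousOn η R := (hωc.comp hH.continuousOn hHG).clm_comp hDc
  have hηω := hω.comp hD hHG
  have hR : R = [[0, 1]] ×ˢ [[r, s]] := by rw [uIcc_of_le zero_le_one, uIcc_of_le hrs.le]
  rw [hR] at hηc hηω
  have hzero := hηω.boundaryIntegral_eq_zero hηc
  have hside : ∀ i ∈ Icc (0 : ℝ) 1, ∀ γ' : ℝ → E,
      (∀ t ∈ Icc r s, HasDerivWithinAt (fun τ => H (i, τ)) (γ' t) (Icc r s) t) →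
      ∫ t in r..s, η (i, t) (0, 1) = ∫ t in r..s, ω (H (i, t)) (γ' t) := by
    intro i hi γ' hγ'
    refine integral_congr fun t ht => ?_
    rw [uIcc_of_le hrs.le] at ht
    simp only [η, ContinuousLinearMap.comp_apply]
    rw [(uniqueDiffOn_Icc hrs t ht).eq_deriv _
      ((hD _ ⟨hi, ht⟩).hasDerivWithinAt_vertical hi) (hγ' t ht)]
  have hbottom : ∫ x in (0 : ℝ)..1, η (x, r) (1, 0) = ∫ x in (0 : ℝ)..1, η (x, s) (1, 0) := by
    refine integral_congr fun x hx => ?_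
    rw [uIcc_of_le zero_le_one] at hx
    have hr := (hD _ ⟨hx, left_mem_Icc.2 hrs.le⟩).hasDerivWithinAt_horizontal
      (left_mem_Icc.2 hrs.le)
    have hs := ((hD _ ⟨hx, right_mem_Icc.2 hrs.le⟩).hasDerivWithinAt_horizontal
      (right_mem_Icc.2 hrs.le)).congr (fun y hy => hHrs y hy) (hHrs x hx)
    simp only [η, ContinuousLinearMap.comp_apply, hHrs x hx,
      (uniqueDiffOn_Icc zero_lt_one x hx).eq_deriv _ hr hs]
  rw [boundaryIntegral, hbottom, hside 0 (left_mem_Icc.2 zero_le_one) γ₀' hγ₀,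
    hside 1 (right_mem_Icc.2 zero_le_one) γ₁' hγ₁, add_sub_cancel_left] at hzero
  exact (sub_eq_zero.1 hzero).symm

end LocallyExact

theorem bmul_comm (p q : ℂ × ℂ) : bmul p q = bmul q p := by
  ext <;> simp only [bmul] <;> ring

theorem bmul_assoc (p q r : ℂ × ℂ) : bmul (bmul p q) r = bmul p (bmul q r) := by
  ext <;> simp only [bmul] <;> ring

noncomputable def bmulL : ℂ × ℂ →L[ℝ] ℂ × ℂ →L[ℝ] ℂ × ℂ :=
  (LinearMap.mk₂ ℝ bmul
    (fun _ _ _ => by ext <;> simp [bmul] <;> ring) (fun _ _ _ => by ext <;> simp [bmul] <;> ring)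
    (fun _ _ _ => by ext <;> simp [bmul] <;> ring) (fun _ _ _ => by ext <;> simp [bmul] <;> ring)
    ).toContinuousBilinearMap

@[simp]
theorem bmulL_apply (p q : ℂ × ℂ) : bmulL p q = bmul p q := rfl

theorem ContinuousLinearMap.apply_eq_bmul (L : ℂ × ℂ →L[ℂ] ℂ × ℂ)
    (hL : L (0, 1) = bmul (L (1, 0)) (0, 1)) (v : ℂ × ℂ) : L v = bmul (L (1, 0)) v :=
  calc L v = L (v.1 • (1, 0) + v.2 • (0, 1)) := by congr 1; ext <;> simp
    _ = v.1 • L (1, 0) + v.2 • bmul (L (1, 0)) (0, 1) := by rw [map_add, map_smul, map_smul, hL]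
    _ = bmul (L (1, 0)) v := by ext <;> simp [bmul] <;> ring

theorem isLocallyExactOn_bmulL {G : Set (ℂ × ℂ)} (hG : IsOpen G) {ψ : ℂ × ℂ → ℂ × ℂ}
    (hψ : ∀ q ∈ G, DifferentiableAt ℂ ψ q)
    (hCR : ∀ q ∈ G, fderiv ℂ ψ q (0, 1) = bmul (fderiv ℂ ψ q (1, 0)) (0, 1)) :
    IsLocallyExactOn (fun q => bmulL (ψ q)) G := by
  intro q hq
  obtain ⟨ε, hε, hball⟩ := Metric.isOpen_iff.1 hG q hq
  obtain ⟨Φ, hΦ⟩ :=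
    (convex_ball q ε).exists_forall_hasFDerivWithinAt_of_hasFDerivWithinAt_symmetric
      (dω := fun x => bmulL.comp ((fderiv ℂ ψ x).restrictScalars ℝ))
      (fun x hx => (bmulL.hasFDerivAt.comp x
        ((hψ x (hball hx)).hasFDerivAt.restrictScalars ℝ)).hasFDerivWithinAt)
      (fun a ha u _ v _ => by
        have hL := (fderiv ℂ ψ a).apply_eq_bmul (hCR a (hball ha))
        change bmul (fderiv ℂ ψ a u) v = bmul (fderiv ℂ ψ a v) u
        rw [hL u, hL v, bmul_assoc, bmul_assoc, bmul_comm u v])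
  exact ⟨ball q ε, mem_nhdsWithin_of_mem_nhds (ball_mem_nhds q hε), Φ, fun y hy =>
    ((hΦ y hy).hasFDerivAt (isOpen_ball.mem_nhds hy)).hasFDerivWithinAt⟩

theorem bicomplex_cauchy_theorem_general (G : Set (ℂ × ℂ)) (hG : IsOpen G)
    (φ₁ φ₂ : ℂ × ℂ → ℂ)
    (hd₁ : ∀ q ∈ G, DifferentiableAt ℂ φ₁ q)
    (hd₂ : ∀ q ∈ G, DifferentiableAt ℂ φ₂ q)
    (hcr₁ : ∀ q ∈ G, fderiv ℂ φ₁ q (1, 0) = fderiv ℂ φ₂ q (0, 1))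
    (hcr₂ : ∀ q ∈ G, fderiv ℂ φ₂ q (1, 0) = -fderiv ℂ φ₁ q (0, 1))
    (r s : ℝ) (hrs : r ≤ s) (p p' : ℝ → ℂ × ℂ)
    (hderiv : ∀ t ∈ Set.Icc r s, HasDerivAt p (p' t) t)
    (H : ℝ × ℝ → ℂ × ℂ)
    (hH : ContDiffOn ℝ 1 H (Set.Icc 0 1 ×ˢ Set.Icc r s))
    (hHG : ∀ q ∈ Set.Icc (0 : ℝ) 1 ×ˢ Set.Icc r s, H q ∈ G)
    (hH1 : ∀ t ∈ Set.Icc r s, H (1, t) = p t)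
    (hHclosed : ∀ h ∈ Set.Icc (0 : ℝ) 1, H (h, r) = H (h, s))
    (hH0 : ∀ t ∈ Set.Icc r s, H (0, t) = H (0, r)) :
    ∫ t in r..s, bmul (φ₁ (p t), φ₂ (p t)) (p' t) = 0 := by
  rcases hrs.eq_or_lt with rfl | hrs
  · exact integral_same
  set ψ : ℂ × ℂ → ℂ × ℂ := fun q => (φ₁ q, φ₂ q)
  have hψ : ∀ q ∈ G, DifferentiableAt ℂ ψ q := fun q hq => (hd₁ q hq).prodMk (hd₂ q hq)
  have hCR : ∀ q ∈ G, fderiv ℂ ψ q (0, 1) = bmul (fderiv ℂ ψ q (1, 0)) (0, 1) := fun q hq => by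
    simp [ψ, (hd₁ q hq).fderiv_prodMk (hd₂ q hq), bmul, hcr₁ q hq, hcr₂ q hq]
  have hγ₀ : ∀ t ∈ Icc r s, HasDerivWithinAt (fun τ => H (0, τ)) 0 (Icc r s) t :=
    fun t ht => (hasDerivWithinAt_const t _ (H (0, r))).congr hH0 (hH0 t ht)
  have hγ₁ : ∀ t ∈ Icc r s, HasDerivWithinAt (fun τ => H (1, τ)) (p' t) (Icc r s) t :=
    fun t ht => (hderiv t ht).hasDerivWithinAt.congr hH1 (hH1 t ht)
  have hhomotopy := (isLocallyExactOn_bmulL hG hψ hCR).integral_eq_of_homotopy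
    (bmulL.continuous.comp_continuousOn fun q hq => (hψ q hq).continuousAt.continuousWithinAt)
    hrs hH hHG hHclosed hγ₀ hγ₁
  calc ∫ t in r..s, bmul (φ₁ (p t), φ₂ (p t)) (p' t)
      = ∫ t in r..s, bmulL (ψ (H (1, t))) (p' t) := integral_congr fun t ht => by
        rw [uIcc_of_le hrs.le] at ht
        simp [ψ, hH1 t ht]
    _ = 0 := by rw [← hhomotopy]; simp only [map_zero, intervalIntegral.integral_zero]

theorem bicomplex_cauchy_theorem (G : Set (ℂ × ℂ)) (hG : IsOpen G)
    (φ₁ φ₂ : ℂ × ℂ → ℂ)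
    (hd₁ : ∀ q ∈ G, DifferentiableAt ℂ φ₁ q)
    (hd₂ : ∀ q ∈ G, DifferentiableAt ℂ φ₂ q)
    (hcr₁ : ∀ q ∈ G, fderiv ℂ φ₁ q (1, 0) = fderiv ℂ φ₂ q (0, 1))
    (hcr₂ : ∀ q ∈ G, fderiv ℂ φ₂ q (1, 0) = -fderiv ℂ φ₁ q (0, 1))
    (r s : ℝ) (hrs : r ≤ s) (p p' : ℝ → ℂ × ℂ)
    (hmem : ∀ t ∈ Set.Icc r s, p t ∈ G)
    (hderiv : ∀ t ∈ Set.Icc r s, HasDerivAt p (p' t) t)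
    (hcont : ContinuousOn p' (Set.Icc r s))
    (hclosed : p r = p s)
    (H : ℝ × ℝ → ℂ × ℂ)
    (hH : ContDiffOn ℝ 1 H (Set.Icc 0 1 ×ˢ Set.Icc r s))
    (hHG : ∀ q ∈ Set.Icc (0 : ℝ) 1 ×ˢ Set.Icc r s, H q ∈ G)
    (hH1 : ∀ t ∈ Set.Icc r s, H (1, t) = p t)
    (hHclosed : ∀ h ∈ Set.Icc (0 : ℝ) 1, H (h, r) = H (h, s))
    (hH0 : ∀ t ∈ Set.Icc r s, H (0, t) = H (0, r)) :
    ∫ t in r..s, bmul (φ₁ (p t), φ₂ (p t)) (p' t) = 0 :=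
  bicomplex_cauchy_theorem_general G hG φ₁ φ₂ hd₁ hd₂ hcr₁ hcr₂ r s hrs p p' hderiv H hH hHG hH1
    hHclosed hH0
end

section
/- Let p : [r,s] → ℂ×ℂ be a continuously differentiable closed curve (p(r) = p(s)) and let p₀ ∈ ℂ×ℂ be such that p(t) − p₀ is nonsingular for every t ∈ [r,s]. Then the value F = ∫_r^s (p(t) − p₀)⁻¹ ⊙ p′(t) dt is a period of the bicomplex exponential: writing F = (A,B) with A, B ∈ ℂ, one has (e^A·cos B, e^A·sin B) = (1,0). -/
/-- Bicomplex inverse (defined for nonsingular numbers). -/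
noncomputable def binv (p : ℂ × ℂ) : ℂ × ℂ :=
  (p.1 / (p.1 ^ 2 + p.2 ^ 2), -p.2 / (p.1 ^ 2 + p.2 ^ 2))

/-!
The two maps `(a, b) ↦ a ± i b` together identify the bicomplex numbers with `ℂ × ℂ`
carrying componentwise operations: they turn `⊙`, the bicomplex inverse and the bicomplex
exponential into the complex product, inverse and exponential. Hence `F` is sent to the
integrals `∫ f' / f` along the two closed curves `f = (p - p₀).1 ± i (p - p₀).2`, which avoid
`0` by nonsingularity, and `exp (∫ f' / f) = 1` along a closed curve because
`exp (-∫_r^t f' / f) * f t` has derivative zero.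
-/

open Set Complex

noncomputable def bexp (p : ℂ × ℂ) : ℂ × ℂ := (exp p.1 * cos p.2, exp p.1 * sin p.2)

noncomputable def idempotentCoord (σ : ℂ) : ℂ × ℂ →L[ℂ] ℂ :=
  ContinuousLinearMap.fst ℂ ℂ ℂ + σ • ContinuousLinearMap.snd ℂ ℂ ℂ

section idempotentCoord

variable {σ : ℂ}

@[simp]
theorem idempotentCoord_apply (p : ℂ × ℂ) : idempotentCoord σ p = p.1 + σ * p.2 := rfl

theorem idempotentCoord_bmul (hσ : σ ^ 2 = -1) (p q : ℂ × ℂ) :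
    idempotentCoord σ (bmul p q) = idempotentCoord σ p * idempotentCoord σ q := by
  simp only [idempotentCoord_apply, bmul]
  linear_combination (-p.2 * q.2) * hσ

theorem sq_add_sq_eq_idempotentCoord_mul (hσ : σ ^ 2 = -1) (p : ℂ × ℂ) :
    p.1 ^ 2 + p.2 ^ 2 = idempotentCoord σ p * idempotentCoord (-σ) p := by
  simp only [idempotentCoord_apply]
  linear_combination (p.2 ^ 2) * hσ

theorem idempotentCoord_ne_zero (hσ : σ ^ 2 = -1) {p : ℂ × ℂ}
    (hp : p.1 ^ 2 + p.2 ^ 2 ≠ 0) : idempotentCoord σ p ≠ 0 :=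
  left_ne_zero_of_mul (sq_add_sq_eq_idempotentCoord_mul hσ p ▸ hp)

theorem idempotentCoord_binv (hσ : σ ^ 2 = -1) {p : ℂ × ℂ} (hp : p.1 ^ 2 + p.2 ^ 2 ≠ 0) :
    idempotentCoord σ (binv p) = (idempotentCoord σ p)⁻¹ := by
  have hq : idempotentCoord (-σ) p ≠ 0 := idempotentCoord_ne_zero (by rwa [neg_sq]) hp
  have hp' : idempotentCoord σ p ≠ 0 := idempotentCoord_ne_zero hσ hp
  rw [binv, sq_add_sq_eq_idempotentCoord_mul hσ]
  simp only [idempotentCoord_apply, neg_mul, ← sub_eq_add_neg] at hp' hq ⊢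
  field_simp
  ring

theorem idempotentCoord_bexp (hσ : σ ^ 2 = -1) (p : ℂ × ℂ) :
    idempotentCoord σ (bexp p) = exp (idempotentCoord σ p) := by
  have : (σ - I) * (σ + I) = 0 := by linear_combination hσ - I_sq
  rcases mul_eq_zero.1 this with h | h
  · obtain rfl : σ = I := sub_eq_zero.1 h
    simp only [bexp, idempotentCoord_apply, exp_add]
    rw [mul_comm I p.2, exp_mul_I]
    ring
  · obtain rfl : σ = -I := eq_neg_of_add_eq_zero_left h
    simp only [bexp, idempotentCoord_apply, exp_add]
    rw [show -I * p.2 = -p.2 * I by ring, exp_mul_I, cos_neg, sin_neg]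
    ring

theorem ext_idempotentCoord {p q : ℂ × ℂ} (hI : idempotentCoord I p = idempotentCoord I q)
    (hnegI : idempotentCoord (-I) p = idempotentCoord (-I) q) : p = q := by
  simp only [idempotentCoord_apply] at hI hnegI
  refine Prod.ext ?_ ?_
  · linear_combination (hI + hnegI) / 2
  · linear_combination (-I / 2) * (hI - hnegI) + (p.2 - q.2) * I_sq

end idempotentCoord

theorem exp_integral_div_mul_eq {r s : ℝ} (hrs : r ≤ s) {f f' : ℝ → ℂ}
    (hderiv : ∀ t ∈ Icc r s, HasDerivAt f (f' t) t) (hcont : ContinuousOn f' (Icc r s))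
    (hf : ∀ t ∈ Icc r s, f t ≠ 0) :
    exp (∫ t in r..s, f' t / f t) * f r = f s := by
  have hfc : ContinuousOn f (Icc r s) := fun t ht =>
    (hderiv t ht).continuousAt.continuousWithinAt
  have hgc : ContinuousOn (fun t => f' t / f t) (Icc r s) := hcont.div hfc hf
  set G : ℝ → ℂ := fun u => ∫ t in r..u, f' t / f t
  have hGc : ContinuousOn G (Icc r s) := by
    simpa [uIcc_of_le hrs] using
      intervalIntegral.continuousOn_primitive_interval (a := r) (b := s)
        (hgc.integrableOn_Icc.mono_set (uIcc_of_le hrs).subset)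
  have hGd : ∀ u ∈ Ioo r s, HasDerivAt G (f' u / f u) u := fun u hu =>
    intervalIntegral.integral_hasDerivAt_right
      ((hgc.mono (Icc_subset_Icc_right hu.2.le)).intervalIntegrable_of_Icc hu.1.le)
      ((hgc.mono Ioo_subset_Icc_self).stronglyMeasurableAtFilter isOpen_Ioo u hu)
      (hgc.continuousAt (Icc_mem_nhds hu.1 hu.2))
  have hconst : ∫ _ in r..s, (0 : ℂ) = exp (-G s) * f s - exp (-G r) * f r := by
    refine intervalIntegral.integral_eq_sub_of_hasDerivAt_of_le hrs
      (hGc.neg.cexp.mul hfc) (fun u hu => ?_) intervalIntegrable_const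
    have hu' := Ioo_subset_Icc_self hu
    refine ((hGd u hu).neg.cexp.mul (hderiv u hu')).congr_deriv ?_
    rw [mul_assoc, neg_mul, div_mul_cancel₀ _ (hf u hu')]
    ring
  have hGr : G r = 0 := intervalIntegral.integral_same
  have hGs : exp (-G s) * f s = f r := by
    rw [intervalIntegral.integral_zero, hGr, neg_zero, exp_zero, one_mul] at hconst
    exact sub_eq_zero.1 hconst.symm
  rw [← hGs, ← mul_assoc, ← exp_add, add_neg_cancel, exp_zero, one_mul]

theorem exp_integral_div_eq_one_of_closed {r s : ℝ} (hrs : r ≤ s) {f f' : ℝ → ℂ}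
    (hderiv : ∀ t ∈ Icc r s, HasDerivAt f (f' t) t) (hcont : ContinuousOn f' (Icc r s))
    (hclosed : f r = f s) (hf : ∀ t ∈ Icc r s, f t ≠ 0) :
    exp (∫ t in r..s, f' t / f t) = 1 :=
  mul_right_cancel₀ (hf r (left_mem_Icc.2 hrs)) <| by
    rw [exp_integral_div_mul_eq hrs hderiv hcont hf, one_mul, hclosed]

theorem exp_idempotentCoord_integral_bmul_binv {σ : ℂ} (hσ : σ ^ 2 = -1) {r s : ℝ}
    (hrs : r ≤ s) {p p' : ℝ → ℂ × ℂ} (hderiv : ∀ t ∈ Icc r s, HasDerivAt p (p' t) t)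
    (hcont : ContinuousOn p' (Icc r s)) (hclosed : p r = p s) {p₀ : ℂ × ℂ}
    (hns : ∀ t ∈ Icc r s, (p t - p₀).1 ^ 2 + (p t - p₀).2 ^ 2 ≠ 0) :
    exp (idempotentCoord σ (∫ t in r..s, bmul (binv (p t - p₀)) (p' t))) = 1 := by
  have hpc : ContinuousOn p (Icc r s) := fun t ht =>
    (hderiv t ht).continuousAt.continuousWithinAt
  have hint :
      IntervalIntegrable (fun t => bmul (binv (p t - p₀)) (p' t)) MeasureTheory.volume r s := by
    refine ContinuousOn.intervalIntegrable_of_Icc hrs ?_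
    simp only [bmul, binv]
    fun_prop (disch := exact hns)
  have heq : EqOn (fun t => idempotentCoord σ (bmul (binv (p t - p₀)) (p' t)))
      (fun t => idempotentCoord σ (p' t) / idempotentCoord σ (p t - p₀)) (uIcc r s) := by
    intro t ht
    rw [uIcc_of_le hrs] at ht
    dsimp only
    rw [idempotentCoord_bmul hσ, idempotentCoord_binv hσ (hns t ht), inv_mul_eq_div]
  rw [← (idempotentCoord σ).intervalIntegral_comp_comm hint, intervalIntegral.integral_congr heq]
  refine exp_integral_div_eq_one_of_closed hrs (fun t ht => ?_)
    ((idempotentCoord σ).continuous.comp_continuousOn hcont) (by rw [hclosed])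
    (fun t ht => idempotentCoord_ne_zero hσ (hns t ht))
  exact ((idempotentCoord σ).restrictScalars ℝ).hasFDerivAt.comp_hasDerivAt t
    ((hderiv t ht).sub_const p₀)

theorem twining_integral_is_period_of_exp (r s : ℝ) (hrs : r ≤ s)
    (p p' : ℝ → ℂ × ℂ)
    (hderiv : ∀ t ∈ Set.Icc r s, HasDerivAt p (p' t) t)
    (hcont : ContinuousOn p' (Set.Icc r s))
    (hclosed : p r = p s)
    (p₀ : ℂ × ℂ)
    (hns : ∀ t ∈ Set.Icc r s, (p t - p₀).1 ^ 2 + (p t - p₀).2 ^ 2 ≠ 0) :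
    ∀ F : ℂ × ℂ, F = (∫ t in r..s, bmul (binv (p t - p₀)) (p' t)) →
      (Complex.exp F.1 * Complex.cos F.2, Complex.exp F.1 * Complex.sin F.2) =
        ((1 : ℂ), (0 : ℂ)) := by
  rintro F rfl
  have hnegI : (-I) ^ 2 = -1 := by rw [neg_sq, I_sq]
  change bexp _ = (1, 0)
  apply ext_idempotentCoord
  · rw [idempotentCoord_bexp I_sq,
      exp_idempotentCoord_integral_bmul_binv I_sq hrs hderiv hcont hclosed hns]
    simp
  · rw [idempotentCoord_bexp hnegI,
      exp_idempotentCoord_integral_bmul_binv hnegI hrs hderiv hcont hclosed hns]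
    simp
end

section
/- Let G′ ⊆ ℂ×ℂ be open and let η₁, η₂ : ℂ×ℂ → ℂ be ℂ-differentiable on G′. Define φₖ(a,b) = ηₖ(conj a, conj b) (so each φₖ is conjugate holomorphic in both a and b), and let Ψ be the associated quaternionic function of (φ₁,φ₂). Then Ψ is conjugate regular: the conjugate Fueter equation ∂Ψ/∂x − i·∂Ψ/∂y − j·∂Ψ/∂z − k·∂Ψ/∂u = 0 holds at every point (x,y,z,u) with (x−iy, z−iu) ∈ G′. -/
/-!
Identify `ℍ` with `ℂ ⊕ ℂj` through `Q (w₁, w₂) = w₁ + w₂ j` (`quatMap`), so that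
`Ψ = Q ∘ (φ₁, φ₂)` with `Q` real linear and intertwining multiplication by `I` with left multiplication by `i`. Since
`(φ₁, φ₂)` is a holomorphic map precomposed with conjugation, its real derivative `D` is
conjugate linear: `D (I • v) = -I • D v`. Hence `i · ∂Ψ/∂y = i · Q(-I • ∂Ψ/∂x) = -i² ∂Ψ/∂x`
and `k · ∂Ψ/∂u = -k i ∂Ψ/∂z = -j ∂Ψ/∂z`, and the conjugate Fueter operator vanishes.
-/

/-- The quaternionic function associated with a pair of complex functions:
`Ψ(x,y,z,u) = Re φ₁ + (Im φ₁)i + (Re φ₂)j + (Im φ₂)k`, the argument being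
`(x+iy, z+iu) ∈ ℂ × ℂ`. -/
noncomputable def quatFn (φ₁ φ₂ : ℂ × ℂ → ℂ) (p : ℂ × ℂ) : Quaternion ℝ :=
  ⟨(φ₁ p).re, (φ₁ p).im, (φ₂ p).re, (φ₂ p).im⟩

/-- The quaternion unit `i`. -/
noncomputable def qI : Quaternion ℝ := ⟨0, 1, 0, 0⟩
/-- The quaternion unit `j`. -/
noncomputable def qJ : Quaternion ℝ := ⟨0, 0, 1, 0⟩
/-- The quaternion unit `k`. -/
noncomputable def qK : Quaternion ℝ := ⟨0, 0, 0, 1⟩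

open Complex ComplexConjugate

noncomputable section

def quatLinearMap : ℂ × ℂ →ₗ[ℝ] Quaternion ℝ where
  toFun w := ⟨w.1.re, w.1.im, w.2.re, w.2.im⟩
  map_add' _ _ := rfl
  map_smul' _ _ := by ext <;> simp <;> rfl

def quatMap : ℂ × ℂ →L[ℝ] Quaternion ℝ :=
  { quatLinearMap with cont := quatLinearMap.continuous_of_finiteDimensional }

theorem quatMap_apply (w : ℂ × ℂ) : quatMap w = ⟨w.1.re, w.1.im, w.2.re, w.2.im⟩ := rfl

theorem quatFn_eq_quatMap_comp (φ₁ φ₂ : ℂ × ℂ → ℂ) :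
    quatFn φ₁ φ₂ = fun p ↦ quatMap (φ₁ p, φ₂ p) := rfl

theorem quatMap_I_smul (w : ℂ × ℂ) : quatMap (I • w) = qI * quatMap w := by
  apply Quaternion.ext <;>
    simp only [Quaternion.re_mul, Quaternion.imI_mul, Quaternion.imJ_mul, Quaternion.imK_mul] <;>
    simp [qI, quatMap_apply]

theorem qI_mul_qI : qI * qI = -1 := by
  apply Quaternion.ext <;>
    simp only [Quaternion.re_mul, Quaternion.imI_mul, Quaternion.imJ_mul, Quaternion.imK_mul,
      Quaternion.re_neg, Quaternion.imI_neg, Quaternion.imJ_neg, Quaternion.imK_neg,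
      Quaternion.re_one, Quaternion.imI_one, Quaternion.imJ_one, Quaternion.imK_one] <;>
    simp [qI]

theorem qK_mul_qI : qK * qI = qJ := by
  apply Quaternion.ext <;>
    simp only [Quaternion.re_mul, Quaternion.imI_mul, Quaternion.imJ_mul, Quaternion.imK_mul] <;>
    simp [qI, qJ, qK]

theorem quatMap_conjFueter_eq_zero (A B : ℂ × ℂ) :
    quatMap A - qI * quatMap ((-I) • A) - qJ * quatMap B - qK * quatMap ((-I) • B) = 0 := by
  simp only [neg_smul, map_neg, quatMap_I_smul, mul_neg, ← mul_assoc, qI_mul_qI, qK_mul_qI]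
  noncomm_ring

def conjProd : ℂ × ℂ →L[ℝ] ℂ × ℂ :=
  conjCLE.toContinuousLinearMap.prodMap conjCLE.toContinuousLinearMap

@[simp]
theorem conjProd_apply (w : ℂ × ℂ) : conjProd w = (conj w.1, conj w.2) := rfl

theorem conjProd_smul (c : ℂ) (w : ℂ × ℂ) : conjProd (c • w) = conj c • conjProd w := by
  ext <;> simp

section ConjHolomorphic

variable {F : Type*} [NormedAddCommGroup F] [NormedSpace ℂ F]

theorem HasFDerivAt.comp_conjProd {η : ℂ × ℂ → F} {L : ℂ × ℂ →L[ℂ] F} {p : ℂ × ℂ}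
    (h : HasFDerivAt η L (conjProd p)) :
    HasFDerivAt (fun w ↦ η (conjProd w)) (L.restrictScalars ℝ ∘L conjProd) p :=
  (h.restrictScalars ℝ).comp p conjProd.hasFDerivAt

theorem restrictScalars_comp_conjProd_smul (L : ℂ × ℂ →L[ℂ] F) (c : ℂ) (v : ℂ × ℂ) :
    (L.restrictScalars ℝ ∘L conjProd) (c • v) = conj c • (L.restrictScalars ℝ ∘L conjProd) v := by
  simp only [ContinuousLinearMap.comp_apply, conjProd_smul, ContinuousLinearMap.coe_restrictScalars',
    map_smul]

end ConjHolomorphic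

end

theorem conj_holomorphic_implies_conjugate_regular_general (G' : Set (ℂ × ℂ))
    (η₁ η₂ : ℂ × ℂ → ℂ)
    (hd₁ : ∀ q ∈ G', DifferentiableAt ℂ η₁ q)
    (hd₂ : ∀ q ∈ G', DifferentiableAt ℂ η₂ q)
    (φ₁ φ₂ : ℂ × ℂ → ℂ)
    (hφ₁ : ∀ a b : ℂ, φ₁ (a, b) = η₁ ((starRingEnd ℂ) a, (starRingEnd ℂ) b))
    (hφ₂ : ∀ a b : ℂ, φ₂ (a, b) = η₂ ((starRingEnd ℂ) a, (starRingEnd ℂ) b))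
    (Ψ : ℂ × ℂ → Quaternion ℝ) (hΨ : Ψ = quatFn φ₁ φ₂) :
    ∀ x y z u : ℝ,
      ((x - y * Complex.I, z - u * Complex.I) : ℂ × ℂ) ∈ G' →
      fderiv ℝ Ψ (x + y * Complex.I, z + u * Complex.I) (1, 0) -
        qI * fderiv ℝ Ψ (x + y * Complex.I, z + u * Complex.I) (Complex.I, 0) -
        qJ * fderiv ℝ Ψ (x + y * Complex.I, z + u * Complex.I) (0, 1) -
        qK * fderiv ℝ Ψ (x + y * Complex.I, z + u * Complex.I) (0, Complex.I) = 0 := by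
  intro x y z u hq
  set p : ℂ × ℂ := (x + y * I, z + u * I)
  have hp : conjProd p = (x - y * I, z - u * I) := by ext <;> simp [p, sub_eq_add_neg]
  set η : ℂ × ℂ → ℂ × ℂ := fun q ↦ (η₁ q, η₂ q)
  have hη : HasFDerivAt η (fderiv ℂ η (conjProd p)) (conjProd p) :=
    (hp ▸ (hd₁ _ hq).prodMk (hd₂ _ hq)).hasFDerivAt
  set D := (fderiv ℂ η (conjProd p)).restrictScalars ℝ ∘L conjProd
  have hΨ' : Ψ = fun w ↦ quatMap (η (conjProd w)) := by
    ext1 w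
    simp [hΨ, quatFn_eq_quatMap_comp, η, hφ₁, hφ₂]
  have hDΨ : HasFDerivAt Ψ (quatMap ∘L D) p := hΨ' ▸ quatMap.hasFDerivAt.comp p hη.comp_conjProd
  have hI : ∀ v : ℂ × ℂ, D (I • v) = (-I) • D v := fun v ↦ by
    rw [restrictScalars_comp_conjProd_smul, conj_I]
  rw [hDΨ.fderiv]
  simpa [← hI] using quatMap_conjFueter_eq_zero (D (1, 0)) (D (0, 1))

theorem conj_holomorphic_implies_conjugate_regular (G' : Set (ℂ × ℂ)) (hG' : IsOpen G')
    (η₁ η₂ : ℂ × ℂ → ℂ)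
    (hd₁ : ∀ q ∈ G', DifferentiableAt ℂ η₁ q)
    (hd₂ : ∀ q ∈ G', DifferentiableAt ℂ η₂ q)
    (φ₁ φ₂ : ℂ × ℂ → ℂ)
    (hφ₁ : ∀ a b : ℂ, φ₁ (a, b) = η₁ ((starRingEnd ℂ) a, (starRingEnd ℂ) b))
    (hφ₂ : ∀ a b : ℂ, φ₂ (a, b) = η₂ ((starRingEnd ℂ) a, (starRingEnd ℂ) b))
    (Ψ : ℂ × ℂ → Quaternion ℝ) (hΨ : Ψ = quatFn φ₁ φ₂) :
    ∀ x y z u : ℝ,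
      ((x - y * Complex.I, z - u * Complex.I) : ℂ × ℂ) ∈ G' →
      fderiv ℝ Ψ (x + y * Complex.I, z + u * Complex.I) (1, 0) -
        qI * fderiv ℝ Ψ (x + y * Complex.I, z + u * Complex.I) (Complex.I, 0) -
        qJ * fderiv ℝ Ψ (x + y * Complex.I, z + u * Complex.I) (0, 1) -
        qK * fderiv ℝ Ψ (x + y * Complex.I, z + u * Complex.I) (0, Complex.I) = 0 :=
  conj_holomorphic_implies_conjugate_regular_general G' η₁ η₂ hd₁ hd₂ φ₁ φ₂ hφ₁ hφ₂ Ψ hΨ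
end
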